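/- For every integer r ≥ 3, k ≥ 2 and every ε > 0, there exists N such that every graph G on n ≥ N vertices with algebraic connectivity α(G) ≥ n - ⌈n/r⌉ + εn contains a copy of the Turán graph T_{kr,r} (the complete r-partite graph with all parts of size k). -/

import Mathlib

/-!
The Rayleigh quotient of the Laplacian at the test vector `n • e_v - 𝟙`, which is
orthogonal to `𝟙`, equals `n · deg v / (n - 1)`; this is Fiedler's bound
`(n - 1) α(G) ≤ n δ(G)`. Hence `α(G) ≥ n - ⌈n / r⌉ + ε n` forces `δ(G) ≥ (1 - 1/r + ε/2) n`
once `n` is large, which exceeds the threshold `(1 - 1/(r-1) + ε/2) n` of the minimum-degree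
Erdős–Stone theorem for `r` parts of size `k`; and that complete equipartite graph is the
Turán graph `T_{kr,r}`.
-/

open SimpleGraph Matrix BigOperators

/-- The algebraic connectivity of a graph on a finite vertex set: the second-smallest
Laplacian eigenvalue, characterized as the infimum of Rayleigh quotients of the
Laplacian over nonzero vectors orthogonal to the all-ones vector. -/
noncomputable def algConn {V : Type*} [Fintype V] (G : SimpleGraph V) : ℝ :=
  letI := Classical.decEq V
  letI := Classical.decRel G.Adj
  sInf { a : ℝ | ∃ x : V → ℝ, x ≠ 0 ∧ ∑ v, x v = 0 ∧
    a = (x ⬝ᵥ (G.lapMatrix ℝ).mulVec x) / (x ⬝ᵥ x) }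

open Filter Fintype

namespace SimpleGraph

variable {V : Type*} [Fintype V] (G : SimpleGraph V)

section Rayleigh

variable [DecidableEq V]

def centeredSingle (v : V) : V → ℝ := Pi.single v (card V : ℝ) - 1

theorem sum_centeredSingle (v : V) : ∑ u, centeredSingle v u = 0 := by
  simp [centeredSingle, Finset.sum_sub_distrib]

theorem centeredSingle_dotProduct_self (v : V) :
    centeredSingle v ⬝ᵥ centeredSingle v = card V * (card V - 1) := by
  simp only [centeredSingle, dotProduct_sub, dotProduct_single, dotProduct_one, Pi.sub_apply,
    Pi.single_eq_same, Pi.one_apply, Finset.sum_sub_distrib, Finset.sum_pi_single',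
    Finset.mem_univ, if_true, Finset.sum_const, Finset.card_univ, nsmul_eq_mul, mul_one]
  ring

theorem lapMatrix_apply_self [DecidableRel G.Adj] (v : V) : G.lapMatrix ℝ v v = G.degree v := by
  simp [lapMatrix, degMatrix]

theorem centeredSingle_dotProduct_lapMatrix_mulVec [DecidableRel G.Adj] (v : V) :
    centeredSingle v ⬝ᵥ (G.lapMatrix ℝ *ᵥ centeredSingle v) = card V ^ 2 * G.degree v := by
  have hker : (fun _ ↦ 1) ᵥ* G.lapMatrix ℝ = 0 := by
    rw [← (G.isSymm_lapMatrix ℝ).eq, vecMul_transpose]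
    exact G.lapMatrix_mulVec_const_eq_zero
  rw [centeredSingle, mulVec_sub, show (1 : V → ℝ) = fun _ ↦ 1 from rfl,
    G.lapMatrix_mulVec_const_eq_zero, sub_zero, sub_dotProduct, dotProduct_mulVec (fun _ ↦ 1),
    hker, zero_dotProduct, sub_zero, single_dotProduct]
  simp only [mulVec_single, Pi.smul_apply, col_apply, lapMatrix_apply_self,
    MulOpposite.op_natCast, MulOpposite.smul_eq_mul_unop, MulOpposite.unop_natCast]
  ring

theorem algConn_eq_sInf [DecidableRel G.Adj] :
    algConn G = sInf { a : ℝ | ∃ x : V → ℝ, x ≠ 0 ∧ ∑ v, x v = 0 ∧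
      a = (x ⬝ᵥ G.lapMatrix ℝ *ᵥ x) / (x ⬝ᵥ x) } := by
  unfold algConn
  congr!

theorem algConn_le_rayleigh [DecidableRel G.Adj] {x : V → ℝ} (hx : x ≠ 0)
    (hsum : ∑ v, x v = 0) : algConn G ≤ (x ⬝ᵥ G.lapMatrix ℝ *ᵥ x) / (x ⬝ᵥ x) := by
  rw [algConn_eq_sInf]
  refine csInf_le ⟨0, ?_⟩ ⟨x, hx, hsum, rfl⟩
  rintro _ ⟨y, -, -, rfl⟩
  have hquad := (G.posSemidef_lapMatrix ℝ).dotProduct_mulVec_nonneg y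
  rw [star_trivial] at hquad
  exact div_nonneg hquad (dotProduct_self_star_nonneg y)

end Rayleigh

theorem sub_one_mul_algConn_le_mul_degree [DecidableRel G.Adj] [Nontrivial V] (v : V) :
    (card V - 1) * algConn G ≤ card V * G.degree v := by
  classical
  have hn : (1 : ℝ) < card V := by exact_mod_cast one_lt_card
  have hx : centeredSingle v ≠ 0 := fun h ↦ by
    have hv := congrFun h v
    simp only [centeredSingle, Pi.sub_apply, Pi.single_eq_same, Pi.one_apply, Pi.zero_apply] at hv
    linarith
  have hα := G.algConn_le_rayleigh hx (sum_centeredSingle v)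
  rw [centeredSingle_dotProduct_lapMatrix_mulVec, centeredSingle_dotProduct_self,
    le_div_iff₀ (by nlinarith)] at hα
  refine le_of_mul_le_mul_left ?_ (by linarith : (0 : ℝ) < card V)
  linarith

theorem sub_one_mul_algConn_le_mul_minDegree [DecidableRel G.Adj] [Nontrivial V] :
    (card V - 1) * algConn G ≤ card V * G.minDegree := by
  obtain ⟨v, hv⟩ := G.exists_minimal_degree_vertex
  rw [hv]
  exact G.sub_one_mul_algConn_le_mul_degree v

theorem le_minDegree_of_le_algConn [DecidableRel G.Adj] {r : ℕ} {ε : ℝ} (hε : 0 < ε)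
    (hn : 2 * (2 + ε) / ε ≤ card V)
    (hG : (card V : ℝ) - ⌈(card V : ℝ) / r⌉ + ε * card V ≤ algConn G) :
    (1 - 1 / r + ε / 2) * card V ≤ G.minDegree := by
  set n : ℝ := (card V : ℝ)
  have hn2 : 2 < n := by
    refine lt_of_lt_of_le ?_ hn
    rw [lt_div_iff₀ hε]
    linarith
  have : Nontrivial V :=
    one_lt_card_iff_nontrivial.mp (Nat.one_lt_cast.mp (by linarith : (1 : ℝ) < n))
  have hεn : 2 * (2 + ε) ≤ ε * n := by rwa [div_le_iff₀' hε] at hn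
  have hα : (1 - 1 / r + ε) * n - 1 ≤ algConn G := by
    have hceil := Int.ceil_lt_add_one (n / r)
    have hα_eq : (1 - 1 / r + ε) * n - 1 = n - (n / r + 1) + ε * n := by ring
    linarith
  have hδ := G.sub_one_mul_algConn_le_mul_minDegree
  refine le_of_mul_le_mul_left ?_ (by linarith : 0 < n)
  have hr : 0 ≤ 1 / (r : ℝ) := by positivity
  nlinarith [mul_le_mul_of_nonneg_left hα (by linarith : 0 ≤ n - 1),
    mul_le_mul_of_nonneg_right hεn (by linarith : 0 ≤ n), mul_nonneg hr (by linarith : 0 ≤ n)]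

end SimpleGraph

theorem stmt16_general (r k : ℕ) (hr : 3 ≤ r) (ε : ℝ) (hε : 0 < ε) :
    ∃ N : ℕ, ∀ n : ℕ, N ≤ n → ∀ G : SimpleGraph (Fin n),
      (n : ℝ) - ⌈(n : ℝ) / (r : ℝ)⌉ + ε * n ≤ algConn G →
      ∃ f : SimpleGraph.turanGraph (k * r) r →g G, Function.Injective f := by
  obtain ⟨s, rfl⟩ : ∃ s, r = s + 1 := ⟨r - 1, by omega⟩
  obtain ⟨N, hN⟩ := eventually_atTop.mp <|
    (eventually_completeEquipartiteGraph_isContained_of_minDegree (half_pos hε) s k).and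
      (eventually_ge_atTop ⌈2 * (2 + ε) / ε⌉₊)
  refine ⟨N, fun n hn G hG ↦ ?_⟩
  classical
  obtain ⟨hErdosStone, hnε⟩ := hN n hn
  have hδ := G.le_minDegree_of_le_algConn (r := s + 1) hε
    (by rw [card_fin]; exact Nat.ceil_le.mp hnε) (by rwa [card_fin])
  rw [card_fin] at hδ
  have hs : 1 / ((s + 1 : ℕ) : ℝ) ≤ 1 / s := by
    gcongr
    · exact_mod_cast (by omega : 0 < s)
    · simp
  obtain ⟨c⟩ := completeEquipartiteGraph.turanGraph.isContained'.trans
    (hErdosStone (G := G) (by nlinarith))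
  rw [mul_comm k]
  exact ⟨c.toHom, c.injective⟩

theorem stmt16 (r k : ℕ) (hr : 3 ≤ r) (hk : 2 ≤ k) (ε : ℝ) (hε : 0 < ε) :
    ∃ N : ℕ, ∀ n : ℕ, N ≤ n → ∀ G : SimpleGraph (Fin n),
      (n : ℝ) - ⌈(n : ℝ) / (r : ℝ)⌉ + ε * n ≤ algConn G →
      ∃ f : SimpleGraph.turanGraph (k * r) r →g G, Function.Injective f :=
  stmt16_general r k hr ε hε
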